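/- Let n ≥ 1, let a ∈ (Fin n → ZMod 2) with a ≠ 0, and let f : (Fin n → ZMod 2) → (Fin n → ZMod 2) satisfy the Simon promise: for all x, y, f(x) = f(y) if and only if y = x or y = x + a. For each u ∈ (Fin n → ZMod 2), define P(u) = Σ_z |2^{−n} · Σ_{x : f(x) = z} (−1)^{⟨u,x⟩}|², where the outer sum is over all z ∈ (Fin n → ZMod 2), ⟨u,x⟩ = Σ_i u_i·x_i ∈ ZMod 2, and (−1)^b denotes 1 if b = 0 and −1 if b = 1. Then P(u) = 2^{−(n−1)} if ⟨u,a⟩ = 0, and P(u) = 0 if ⟨u,a⟩ = 1. -/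

import Mathlib

/-!
Every nonempty fibre of `f` is a coset `{x, x + a}`, so the amplitude of the outcome `z = f x` is
`2⁻ⁿ (−1)^⟨u,x⟩ (1 + (−1)^⟨u,a⟩)`. It vanishes when `⟨u,a⟩ = 1` and has modulus `2¹⁻ⁿ` otherwise,
and summing its square over the `2ⁿ⁻¹` fibres gives `2ⁿ⁻¹ · 4¹⁻ⁿ = 2¹⁻ⁿ`.
-/

/-- `(−1)^b` for `b : ZMod 2`, as a complex number. -/
noncomputable def negOnePow (b : ZMod 2) : ℂ := if b = 0 then 1 else -1

/-- Mod-2 inner product of two bit strings. -/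
def dotp {n : ℕ} (u x : Fin n → ZMod 2) : ZMod 2 := ∑ i, u i * x i

open Finset

theorem negOnePow_add (b c : ZMod 2) : negOnePow (b + c) = negOnePow b * negOnePow c := by
  have h : ∀ b : ZMod 2, b = 0 ∨ b = 1 := by decide
  rcases h b with rfl | rfl <;> rcases h c with rfl | rfl <;>
    simp [negOnePow, show (1 : ZMod 2) + 1 = 0 from rfl]

theorem norm_negOnePow (b : ZMod 2) : ‖negOnePow b‖ = 1 := by
  have h : ∀ b : ZMod 2, b = 0 ∨ b = 1 := by decide
  rcases h b with rfl | rfl <;> simp [negOnePow]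

theorem dotp_add_right {n : ℕ} (u x y : Fin n → ZMod 2) :
    dotp u (x + y) = dotp u x + dotp u y := by
  simp only [dotp, Pi.add_apply, mul_add, sum_add_distrib]

theorem sum_norm_sq_fiberwise_of_norm_eq {α β : Type*} [Fintype α] [Fintype β] [DecidableEq β]
    (f : α → β) (g : α → ℂ) (K : ℝ) (hK : ∀ x₀, ‖∑ x with f x = f x₀, g x‖ = K) :
    ∑ z, ‖∑ x, if f x = z then g x else 0‖ ^ 2 = #(univ.image f) * K ^ 2 := by
  rw [← sum_subset (subset_univ (univ.image f)), ← nsmul_eq_mul, ← sum_const]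
  · refine sum_congr rfl fun z hz => ?_
    obtain ⟨x₀, -, rfl⟩ := mem_image.mp hz
    rw [← sum_filter, hK]
  · intro z _ hz
    have hfz (x : α) : f x ≠ z := fun hx => hz (hx ▸ mem_image_of_mem f (mem_univ x))
    simp [hfz]

section TwoToOne

variable {G β : Type*} [AddGroup G] [Fintype G] [DecidableEq G] [DecidableEq β]
  {f : G → β} {a : G}

theorem filter_apply_eq_apply_eq_pair (hf : ∀ x y, f x = f y ↔ y = x ∨ y = x + a) (x₀ : G) :
    ({x | f x = f x₀} : Finset G) = {x₀, x₀ + a} := by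
  ext x
  simp only [mem_filter, mem_univ, true_and, mem_insert, mem_singleton]
  rw [eq_comm, hf]

theorem card_image_mul_two (hf : ∀ x y, f x = f y ↔ y = x ∨ y = x + a) (ha : a ≠ 0) :
    #(univ.image f) * 2 = Fintype.card G := by
  rw [← card_univ, card_eq_sum_card_image f univ, ← smul_eq_mul, ← sum_const]
  refine sum_congr rfl fun z hz => ?_
  obtain ⟨x₀, -, rfl⟩ := mem_image.mp hz
  rw [filter_apply_eq_apply_eq_pair hf, card_pair (add_ne_left.mpr ha).symm]

theorem sum_filter_apply_eq_apply_eq {M : Type*} [AddCommMonoid M]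
    (hf : ∀ x y, f x = f y ↔ y = x ∨ y = x + a) (ha : a ≠ 0) (g : G → M) (x₀ : G) :
    ∑ x with f x = f x₀, g x = g x₀ + g (x₀ + a) := by
  rw [filter_apply_eq_apply_eq_pair hf, sum_pair (add_ne_left.mpr ha).symm]

end TwoToOne

theorem sum_negOnePow_dotp_filter_apply_eq_apply_eq {n : ℕ} {β : Type*} [DecidableEq β]
    {f : (Fin n → ZMod 2) → β} {a : Fin n → ZMod 2}
    (hf : ∀ x y, f x = f y ↔ y = x ∨ y = x + a) (ha : a ≠ 0) (u x₀ : Fin n → ZMod 2) :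
    ∑ x with f x = f x₀, negOnePow (dotp u x) =
      negOnePow (dotp u x₀) * (1 + negOnePow (dotp u a)) := by
  rw [sum_filter_apply_eq_apply_eq hf ha, dotp_add_right, negOnePow_add, mul_one_add]

theorem simon_measurement_distribution_general (n : ℕ)
    (a : Fin n → ZMod 2) (ha : a ≠ 0)
    (f : (Fin n → ZMod 2) → (Fin n → ZMod 2))
    (hf : ∀ x y, f x = f y ↔ (y = x ∨ y = x + a))
    (P : (Fin n → ZMod 2) → ℝ)
    (hP : ∀ u, P u = ∑ z : Fin n → ZMod 2,
      ‖((2 : ℂ) ^ n)⁻¹ *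
        ∑ x, (if f x = z then negOnePow (dotp u x) else 0)‖ ^ 2) :
    ∀ u, (dotp u a = 0 → P u = (((2 : ℝ) ^ (n - 1))⁻¹)) ∧
         (dotp u a = 1 → P u = 0) := by
  intro u
  obtain ⟨m, rfl⟩ : ∃ m, n = m + 1 :=
    Nat.exists_eq_succ_of_ne_zero fun h => ha (by subst h; exact Subsingleton.elim _ _)
  have hcard : #(univ.image f) = 2 ^ m := by
    simpa [pow_succ] using card_image_mul_two hf ha
  have hK (x₀ : Fin (m + 1) → ZMod 2) :
      ‖∑ x with f x = f x₀, ((2 : ℂ) ^ (m + 1))⁻¹ * negOnePow (dotp u x)‖ =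
        (2 ^ (m + 1))⁻¹ * ‖1 + negOnePow (dotp u a)‖ := by
    rw [← mul_sum, sum_negOnePow_dotp_filter_apply_eq_apply_eq hf ha, norm_mul, norm_mul,
      norm_negOnePow, one_mul]
    simp
  have hPu : P u = 2 ^ m * ((2 ^ (m + 1))⁻¹ * ‖1 + negOnePow (dotp u a)‖) ^ 2 := by
    simp only [hP u, mul_sum, mul_ite, mul_zero]
    rw [sum_norm_sq_fiberwise_of_norm_eq f _ _ hK, hcard]
    norm_cast
  refine ⟨fun h => ?_, fun h => ?_⟩ <;> rw [hPu, h]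
  · norm_num [negOnePow, pow_succ]
    field_simp
  · norm_num [negOnePow]

/-- The outcome distribution of the measurement in Simon's algorithm: for a function `f`
satisfying the Simon promise with hidden string `a ≠ 0`, the measured string `u` is
uniformly distributed over the subspace `{u : ⟨u,a⟩ = 0}`. -/
theorem simon_measurement_distribution (n : ℕ) (hn : 1 ≤ n)
    (a : Fin n → ZMod 2) (ha : a ≠ 0)
    (f : (Fin n → ZMod 2) → (Fin n → ZMod 2))
    (hf : ∀ x y, f x = f y ↔ (y = x ∨ y = x + a))
    (P : (Fin n → ZMod 2) → ℝ)
    (hP : ∀ u, P u = ∑ z : Fin n → ZMod 2,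
      ‖((2 : ℂ) ^ n)⁻¹ *
        ∑ x, (if f x = z then negOnePow (dotp u x) else 0)‖ ^ 2) :
    ∀ u, (dotp u a = 0 → P u = (((2 : ℝ) ^ (n - 1))⁻¹)) ∧
         (dotp u a = 1 → P u = 0) :=
  simon_measurement_distribution_general n a ha f hf P hP
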